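/- Suppose the partial action (X,P,T) is directed and P is countable. Then there exists an increasing sequence F₁ ⊆ F₂ ⊆ F₃ ⊆ ⋯ of finite action-directed subsets of P with ⋃_{i} F_i = P. -/

import Mathlib

/-- A (partial, right) action `(X, P, T)` of a monoid `P` on a set `X`:
domains `U m ⊆ X` and maps `x · m := act x m` (only meaningful on `U m`) such that
`U e = X`, `x · e = x`, `x ∈ U (m n) ↔ (x ∈ U m ∧ x·m ∈ U n)`, and in that case
`(x·m)·n = x·(m n)`. -/
structure PartialAction (P : Type*) [Monoid P] (X : Type*) where
  U : P → Set X
  act : X → P → X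
  U_one : U 1 = Set.univ
  act_one : ∀ x : X, act x 1 = x
  mem_U_mul : ∀ (x : X) (m n : P), x ∈ U (m * n) ↔ x ∈ U m ∧ act x m ∈ U n
  act_mul : ∀ (x : X) (m n : P), x ∈ U (m * n) → act (act x m) n = act x (m * n)

/-- `m ≤ n` in `P` iff `n = m·p` for some `p ∈ P`. -/
def pLe {P : Type*} [Monoid P] (m n : P) : Prop := ∃ p : P, n = m * p

/-- The partial action is directed: whenever `U m ∩ U n ≠ ∅` there is an upper bound
`r` of `m` and `n` with `U m ∩ U n = U r`. -/
def PartialAction.IsDirectedAction {P : Type*} [Monoid P] {X : Type*}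
    (A : PartialAction P X) : Prop :=
  ∀ m n : P, (A.U m ∩ A.U n).Nonempty →
    ∃ r : P, pLe m r ∧ pLe n r ∧ A.U m ∩ A.U n = A.U r

/-- A subset `F ⊆ P` is action-directed if `e ∈ F` and whenever `m, n ∈ F` with
`U m ∩ U n ≠ ∅` there is `r ∈ F` with `m ≤ r`, `n ≤ r` and `U r = U m ∩ U n`. -/
def PartialAction.ActionDirected {P : Type*} [Monoid P] {X : Type*}
    (A : PartialAction P X) (F : Set P) : Prop :=
  (1 : P) ∈ F ∧
  ∀ m ∈ F, ∀ n ∈ F, (A.U m ∩ A.U n).Nonempty →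
    ∃ r ∈ F, pLe m r ∧ pLe n r ∧ A.U r = A.U m ∩ A.U n

/-!
For a finite `F ⊆ P`, pick for every `S ⊆ F` with `⋂ m ∈ S, U m ≠ ∅` a common upper bound
`join S` of `S` with `U (join S) = ⋂ m ∈ S, U m`; directedness gives one by induction on `S`,
and choosing them by recursion on `S` above all `join T`, `T ⊊ S`, makes `join` monotone. Then
`{1} ∪ F ∪ {join S}` is finite and action-directed: an element `a` of it with `U a ≠ ∅` lies
below some `join Sa` with `U a = ⋂ m ∈ Sa, U m`, so `join (Sa ∪ Sb)` serves for `a` and `b`.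
Enumerating `P` and alternately adding the next element and closing gives the chain.
-/

theorem exists_finset_chain_cover {α : Type*} [Countable α] [Nonempty α] (Q : Finset α → Prop)
    (h : ∀ s : Finset α, ∃ t, s ⊆ t ∧ Q t) :
    ∃ F : ℕ → Finset α, (∀ i, F i ⊆ F (i + 1)) ∧ (∀ i, Q (F i)) ∧
      ⋃ i, (F i : Set α) = Set.univ := by
  classical
  obtain ⟨f, hf⟩ := exists_surjective_nat α
  choose g hsub hQ using h
  let F : ℕ → Finset α := fun n => Nat.rec (g ∅) (fun n s => g (insert (f n) s)) n
  refine ⟨F, fun i => (Finset.subset_insert _ _).trans (hsub _), fun i => ?_, ?_⟩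
  · cases i <;> exact hQ _
  · refine Set.eq_univ_of_forall fun a => ?_
    obtain ⟨n, rfl⟩ := hf a
    exact Set.mem_iUnion.mpr ⟨n + 1, hsub _ (Finset.mem_insert_self _ _)⟩

section

variable {P : Type*} [Monoid P] {X : Type*}

theorem pLe_refl (m : P) : pLe m m := ⟨1, (mul_one m).symm⟩

theorem one_pLe (m : P) : pLe 1 m := ⟨m, (one_mul m).symm⟩

theorem pLe_trans {a b c : P} : pLe a b → pLe b c → pLe a c := by
  rintro ⟨p, rfl⟩ ⟨q, rfl⟩
  exact ⟨p * q, mul_assoc _ _ _⟩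

namespace PartialAction.IsDirectedAction

variable {A : PartialAction P X} (hdir : A.IsDirectedAction)

include hdir in
theorem exists_upperBound (S : Finset P) (hS : (⋂ m ∈ S, A.U m).Nonempty) :
    ∃ r, (∀ m ∈ S, pLe m r) ∧ A.U r = ⋂ m ∈ S, A.U m := by
  classical
  induction S using Finset.induction_on with
  | empty => exact ⟨1, by simp, by simp [A.U_one]⟩
  | insert a S _ ih =>
    rw [Finset.set_biInter_insert] at hS ⊢
    obtain ⟨r', hSr', hr'⟩ := ih (hS.mono Set.inter_subset_right)
    obtain ⟨r, har, hr'r, hr⟩ := hdir a r' (hr' ▸ hS)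
    refine ⟨r, Finset.forall_mem_insert _ _ _ |>.mpr ⟨har, fun m hm => ?_⟩, by rw [← hr', hr]⟩
    exact pLe_trans (hSr' m hm) hr'r

open Classical in
noncomputable def join (S : Finset P) : P :=
  let L := S ∪ S.ssubsets.attach.image fun T => join T.1
  if h : (⋂ m ∈ L, A.U m).Nonempty then (hdir.exists_upperBound L h).choose else 1
termination_by S.card
decreasing_by exact Finset.card_lt_card (Finset.mem_ssubsets.mp T.2)

theorem join_spec (S : Finset P) (hS : (⋂ m ∈ S, A.U m).Nonempty) :
    (∀ m ∈ S, pLe m (hdir.join S)) ∧ (∀ T ⊆ S, pLe (hdir.join T) (hdir.join S)) ∧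
      A.U (hdir.join S) = ⋂ m ∈ S, A.U m := by
  classical
  induction S using Finset.strongInduction with
  | H S ih =>
  set L := S ∪ S.ssubsets.attach.image fun T => hdir.join T.1
  -- each earlier `join T` already has domain `⋂ m ∈ T, U m ⊇ ⋂ m ∈ S, U m`
  have hL : ⋂ m ∈ L, A.U m = ⋂ m ∈ S, A.U m := by
    rw [Finset.set_biInter_inter, Finset.set_biInter_finset_image, Set.inter_eq_left]
    refine Set.subset_iInter₂ fun T _ => ?_
    have hTS := Finset.mem_ssubsets.mp T.2
    rw [(ih T hTS (hS.mono (Set.biInter_subset_biInter_left hTS.1))).2.2]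
    exact Set.biInter_subset_biInter_left hTS.1
  have hLne : (⋂ m ∈ L, A.U m).Nonempty := hL ▸ hS
  have hjoin : hdir.join S = (hdir.exists_upperBound L hLne).choose := by
    rw [join, dif_pos hLne]
  obtain ⟨hle, hU⟩ := (hdir.exists_upperBound L hLne).choose_spec
  rw [← hjoin, hL] at *
  refine ⟨fun m hm => hle m (Finset.mem_union_left _ hm), fun T hT => ?_, hU⟩
  obtain rfl | hT := hT.eq_or_ssubset
  · exact pLe_refl _
  · exact hle _ (Finset.mem_union_right _
      (Finset.mem_image.mpr ⟨⟨T, Finset.mem_ssubsets.mpr hT⟩, Finset.mem_attach _ _, rfl⟩))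

open Classical in
noncomputable def closure (F : Finset P) : Finset P :=
  insert 1 (F ∪ (F.powerset.filter fun S => (⋂ m ∈ S, A.U m).Nonempty).image hdir.join)

theorem subset_closure (F : Finset P) : F ⊆ hdir.closure F := by
  classical exact (Finset.subset_union_left).trans (Finset.subset_insert _ _)

theorem join_mem_closure {F S : Finset P} (hSF : S ⊆ F) (hS : (⋂ m ∈ S, A.U m).Nonempty) :
    hdir.join S ∈ hdir.closure F := by
  classical exact Finset.mem_insert_of_mem <| Finset.mem_union_right _ <|
    Finset.mem_image_of_mem _ (Finset.mem_filter.mpr ⟨Finset.mem_powerset.mpr hSF, hS⟩)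

theorem exists_le_join_of_mem_closure {F : Finset P} {g : P} (hg : g ∈ hdir.closure F)
    (hUg : (A.U g).Nonempty) :
    ∃ S ⊆ F, pLe g (hdir.join S) ∧ A.U g = ⋂ m ∈ S, A.U m := by
  classical
  rcases Finset.mem_insert.mp hg with rfl | hg
  · exact ⟨∅, Finset.empty_subset _, one_pLe _, by simp [A.U_one]⟩
  rcases Finset.mem_union.mp hg with hgF | hg
  · refine ⟨{g}, Finset.singleton_subset_iff.mpr hgF, ?_, (Finset.set_biInter_singleton _ _).symm⟩
    exact (hdir.join_spec {g} (by rwa [Finset.set_biInter_singleton])).1 g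
      (Finset.mem_singleton_self g)
  · obtain ⟨S, hS, rfl⟩ := Finset.mem_image.mp hg
    obtain ⟨hSF, hSne⟩ := Finset.mem_filter.mp hS
    exact ⟨S, Finset.mem_powerset.mp hSF, pLe_refl _, (hdir.join_spec S hSne).2.2⟩

theorem actionDirected_closure (F : Finset P) : A.ActionDirected (hdir.closure F) := by
  classical
  refine ⟨Finset.mem_insert_self _ _, fun a ha b hb hab => ?_⟩
  obtain ⟨Sa, hSaF, haSa, hUa⟩ :=
    hdir.exists_le_join_of_mem_closure ha (hab.mono Set.inter_subset_left)
  obtain ⟨Sb, hSbF, hbSb, hUb⟩ :=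
    hdir.exists_le_join_of_mem_closure hb (hab.mono Set.inter_subset_right)
  have hU : ⋂ m ∈ Sa ∪ Sb, A.U m = A.U a ∩ A.U b := by
    rw [Finset.set_biInter_inter, hUa, hUb]
  obtain ⟨-, hmono, hjoin⟩ := hdir.join_spec (Sa ∪ Sb) (hU ▸ hab)
  exact ⟨hdir.join (Sa ∪ Sb), hdir.join_mem_closure (Finset.union_subset hSaF hSbF) (hU ▸ hab),
    pLe_trans haSa (hmono Sa Finset.subset_union_left),
    pLe_trans hbSb (hmono Sb Finset.subset_union_right), hjoin.trans hU⟩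

end PartialAction.IsDirectedAction

end

/-- if the partial action `(X,P,T)` is directed and `P` is countable,
then there is an increasing sequence `F₁ ⊆ F₂ ⊆ ⋯` of finite action-directed subsets
of `P` whose union is all of `P`. -/
theorem stmt9 {P : Type*} [Monoid P] [Countable P] {X : Type*}
    (A : PartialAction P X) (hdir : A.IsDirectedAction) :
    ∃ F : ℕ → Finset P,
      (∀ i : ℕ, F i ⊆ F (i + 1)) ∧
      (∀ i : ℕ, A.ActionDirected ((F i : Set P))) ∧
      (⋃ i : ℕ, (F i : Set P)) = Set.univ :=
  have : Nonempty P := ⟨1⟩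
  exists_finset_chain_cover (fun F => A.ActionDirected (F : Set P))
    fun F => ⟨hdir.closure F, hdir.subset_closure F, hdir.actionDirected_closure F⟩
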